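/- Fix real parameters a > 0, b ∈ ℝ, σ > 0, λ₀ ∈ ℝ, ϱ > 0, ς > 0 and t > 0, and define g̃(s) := −(σ²/(2a))(1 − e^{−as}), g(s, y) := 1 + i y g̃(s), ψ(s, y) := i y e^{−as} / g(s, y), f₁(y) := g(t, y)^{−2ab/σ²} (principal complex power), f₂(y) := exp( ∫₀^t ∫₀^∞ (e^{x̄ ψ(s, y)} − 1) ϱ ς^{−1} e^{−x̄/ς} dx̄ ds ), and φ(y) := f₁(y) e^{λ₀ ψ(t, y)} f₂(y). Then for every y ∈ ℝ the function φ is differentiable at y with φ′(y) = φ(y) · [ i b (1 − e^{−at}) / g(t, y) + i λ₀ e^{−at} / g(t, y)² + i ∫₀^t ∫₀^∞ x̄ e^{x̄ ψ(s, y) − as} / g(s, y)² · ϱ ς^{−1} e^{−x̄/ς} dx̄ ds ]. -/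

import Mathlib

noncomputable def gtilde (a σ : ℝ) (s : ℝ) : ℝ :=
  -(σ ^ 2 / (2 * a)) * (1 - Real.exp (-a * s))

noncomputable def gfn (a σ : ℝ) (s y : ℝ) : ℂ :=
  1 + Complex.I * (y : ℂ) * (gtilde a σ s : ℂ)

noncomputable def psifn (a σ : ℝ) (s y : ℝ) : ℂ :=
  Complex.I * (y : ℂ) * (Real.exp (-a * s) : ℂ) / gfn a σ s y

open MeasureTheory Set Complex

lemma normSq_gfn (a σ s y : ℝ) :
    Complex.normSq (gfn a σ s y) = 1 + y ^ 2 * (gtilde a σ s) ^ 2 := by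
  simp [gfn, Complex.normSq_apply]
  ring

lemma one_le_normSq_gfn (a σ s y : ℝ) : 1 ≤ Complex.normSq (gfn a σ s y) := by
  rw [normSq_gfn]; nlinarith [sq_nonneg (y * gtilde a σ s), sq_nonneg y, sq_nonneg (gtilde a σ s)]

lemma gfn_ne (a σ s y : ℝ) : gfn a σ s y ≠ 0 := by
  intro h
  have := one_le_normSq_gfn a σ s y
  rw [h] at this; norm_num at this

lemma one_le_norm_gfn (a σ s y : ℝ) : 1 ≤ ‖gfn a σ s y‖ := by
  have h := one_le_normSq_gfn a σ s y
  rw [← Complex.sq_norm] at h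
  nlinarith [norm_nonneg (gfn a σ s y)]

lemma gtilde_nonpos {a : ℝ} (σ : ℝ) (ha : 0 < a) {s : ℝ} (hs : 0 ≤ s) : gtilde a σ s ≤ 0 := by
  unfold gtilde
  have h1 : Real.exp (-a * s) ≤ 1 := by
    rw [Real.exp_le_one_iff]; nlinarith
  have h2 : 0 ≤ σ ^ 2 / (2 * a) := by positivity
  nlinarith

lemma re_psifn_nonpos {a : ℝ} (σ : ℝ) (ha : 0 < a) {s : ℝ} (hs : 0 ≤ s) (y : ℝ) :
    (psifn a σ s y).re ≤ 0 := by
  have hgt := gtilde_nonpos σ ha hs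
  have hns : 0 < Complex.normSq (gfn a σ s y) :=
    lt_of_lt_of_le one_pos (one_le_normSq_gfn a σ s y)
  have hre : (psifn a σ s y).re =
      (y ^ 2 * Real.exp (-a * s) * gtilde a σ s) / Complex.normSq (gfn a σ s y) := by
    rw [psifn, Complex.div_re]
    simp only [gfn, Complex.mul_re, Complex.mul_im, Complex.I_re, Complex.I_im,
      Complex.ofReal_re, Complex.ofReal_im, Complex.add_re, Complex.add_im,
      Complex.one_re, Complex.one_im]
    ring
  rw [hre]
  apply div_nonpos_of_nonpos_of_nonneg _ hns.le
  have : 0 ≤ y ^ 2 * Real.exp (-a * s) := by positivity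
  nlinarith

lemma norm_exp_mul_psifn {a : ℝ} (σ : ℝ) (ha : 0 < a) {s x : ℝ} (hs : 0 ≤ s) (hx : 0 ≤ x)
    (y : ℝ) : ‖Complex.exp ((x : ℂ) * psifn a σ s y)‖ ≤ 1 := by
  rw [Complex.norm_exp]
  have : ((x : ℂ) * psifn a σ s y).re = x * (psifn a σ s y).re := by
    simp [Complex.mul_re]
  rw [this]
  rw [Real.exp_le_one_iff]
  exact mul_nonpos_of_nonneg_of_nonpos hx (re_psifn_nonpos σ ha hs y)

lemma hasDerivAt_gfn (a σ s : ℝ) (y : ℝ) :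
    HasDerivAt (fun y : ℝ => gfn a σ s y) (Complex.I * (gtilde a σ s : ℂ)) y := by
  have h : HasDerivAt (fun z : ℂ => 1 + Complex.I * z * (gtilde a σ s : ℂ))
      (Complex.I * (gtilde a σ s : ℂ)) (y : ℂ) := by
    simpa using (((hasDerivAt_id (y : ℂ)).const_mul Complex.I).mul_const
      ((gtilde a σ s : ℂ))).const_add 1
  exact h.comp_ofReal

lemma hasDerivAt_psifn (a σ s : ℝ) (y : ℝ) :
    HasDerivAt (fun y : ℝ => psifn a σ s y)
      (Complex.I * (Real.exp (-a * s) : ℂ) / (gfn a σ s y) ^ 2) y := by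
  set gt : ℂ := (gtilde a σ s : ℂ)
  set e : ℂ := (Real.exp (-a * s) : ℂ)
  have hG : ∀ z : ℂ, (1 + Complex.I * z * gt) = 1 + Complex.I * z * gt := fun _ => rfl
  have hnum : HasDerivAt (fun z : ℂ => Complex.I * z * e) (Complex.I * e) (y : ℂ) := by
    simpa using ((hasDerivAt_id (y : ℂ)).const_mul Complex.I).mul_const e
  have hden : HasDerivAt (fun z : ℂ => 1 + Complex.I * z * gt) (Complex.I * gt) (y : ℂ) := by
    simpa using (((hasDerivAt_id (y : ℂ)).const_mul Complex.I).mul_const gt).const_add 1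
  have hne : (1 + Complex.I * (y : ℂ) * gt) ≠ 0 := gfn_ne a σ s y
  have h := hnum.div hden hne
  have h2 : HasDerivAt (fun z : ℂ => Complex.I * z * e / (1 + Complex.I * z * gt))
      (Complex.I * e / (1 + Complex.I * (y : ℂ) * gt) ^ 2) (y : ℂ) := by
    refine h.congr_deriv ?_
    have hI : Complex.I * Complex.I = -1 := Complex.I_mul_I
    field_simp
    ring_nf
  exact h2.comp_ofReal

noncomputable def f1 (a b σ t : ℝ) (y : ℝ) : ℂ :=
  gfn a σ t y ^ ((-(2 * a * b / σ ^ 2) : ℝ) : ℂ)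

noncomputable def f2 (a σ ϱ ς t : ℝ) (y : ℝ) : ℂ :=
  Complex.exp (∫ s in Set.Ioc (0 : ℝ) t, ∫ x in Set.Ioi (0 : ℝ),
    (Complex.exp ((x : ℂ) * psifn a σ s y) - 1) * ((ϱ / ς * Real.exp (-x / ς) : ℝ) : ℂ))

noncomputable def phifn (a b σ lam0 ϱ ς t : ℝ) (y : ℝ) : ℂ :=
  f1 a b σ t y * Complex.exp ((lam0 : ℂ) * psifn a σ t y) * f2 a σ ϱ ς t y

lemma continuous_gfn (a σ y : ℝ) : Continuous (fun s => gfn a σ s y) := by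
  unfold gfn gtilde; fun_prop

lemma continuous_psifn (a σ y : ℝ) : Continuous (fun s => psifn a σ s y) := by
  unfold psifn
  exact Continuous.div (by fun_prop) (continuous_gfn a σ y) (fun s => gfn_ne a σ s y)

lemma hasDerivAt_f1 (a b σ t : ℝ) (ha : 0 < a) (hσ : 0 < σ) (y : ℝ) :
    HasDerivAt (f1 a b σ t)
      (f1 a b σ t y *
        (Complex.I * (b : ℂ) * ((1 - Real.exp (-a * t) : ℝ) : ℂ) / gfn a σ t y)) y := by
  set c : ℂ := ((-(2 * a * b / σ ^ 2) : ℝ) : ℂ) with hc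
  set gt : ℂ := (gtilde a σ t : ℂ) with hgt
  have hslit : gfn a σ t y ∈ Complex.slitPlane := by
    rw [Complex.mem_slitPlane_iff]
    left
    simp [gfn]
  have hden : HasDerivAt (fun z : ℂ => 1 + Complex.I * z * gt) (Complex.I * gt) (y : ℂ) := by
    simpa using (((hasDerivAt_id (y : ℂ)).const_mul Complex.I).mul_const gt).const_add 1
  have h := (hden.cpow_const (c := c) hslit).comp_ofReal
  have h2 : HasDerivAt (f1 a b σ t)
      (c * gfn a σ t y ^ (c - 1) * (Complex.I * gt)) y := h
  have hr : (-(2 * a * b / σ ^ 2)) * gtilde a σ t = b * (1 - Real.exp (-a * t)) := by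
    unfold gtilde; field_simp
  have hcc : c * gt = (b : ℂ) * ((1 - Real.exp (-a * t) : ℝ) : ℂ) := by
    rw [hc, hgt]
    exact_mod_cast hr
  have hgne : gfn a σ t y ≠ 0 := gfn_ne a σ t y
  convert h2 using 1
  unfold f1
  rw [← hc, Complex.cpow_sub _ _ (gfn_ne a σ t y), Complex.cpow_one]
  linear_combination (-(gfn a σ t y ^ c * Complex.I / gfn a σ t y)) * hcc

lemma hasDerivAt_Fterm (a σ ϱ ς : ℝ) (s x y : ℝ) :
    HasDerivAt (fun y : ℝ =>
        (Complex.exp ((x : ℂ) * psifn a σ s y) - 1) * ((ϱ / ς * Real.exp (-x / ς) : ℝ) : ℂ))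
      ((x : ℂ) * (Complex.I * ((Real.exp (-a * s) : ℝ) : ℂ) / (gfn a σ s y) ^ 2) *
        Complex.exp ((x : ℂ) * psifn a σ s y) * ((ϱ / ς * Real.exp (-x / ς) : ℝ) : ℂ)) y := by
  have h := ((((hasDerivAt_psifn a σ s y).const_mul (x : ℂ)).cexp).sub_const 1).mul_const
    ((ϱ / ς * Real.exp (-x / ς) : ℝ) : ℂ)
  refine h.congr_deriv ?_
  ring

lemma norm_Fterm'_le (a σ ϱ ς : ℝ) (ha : 0 < a) {s x : ℝ} (hs : 0 < s) (hx : 0 < x) (y : ℝ) :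
    ‖(x : ℂ) * (Complex.I * ((Real.exp (-a * s) : ℝ) : ℂ) / (gfn a σ s y) ^ 2) *
        Complex.exp ((x : ℂ) * psifn a σ s y) * ((ϱ / ς * Real.exp (-x / ς) : ℝ) : ℂ)‖
      ≤ x * |ϱ / ς * Real.exp (-x / ς)| := by
  have h2 : ‖Complex.I * ((Real.exp (-a * s) : ℝ) : ℂ) / (gfn a σ s y) ^ 2‖ ≤ 1 := by
    rw [norm_div, norm_mul]
    have hg : (1 : ℝ) ≤ ‖(gfn a σ s y) ^ 2‖ := by
      rw [norm_pow]
      have := one_le_norm_gfn a σ s y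
      nlinarith
    have he : ‖((Real.exp (-a * s) : ℝ) : ℂ)‖ ≤ 1 := by
      rw [Complex.norm_real, Real.norm_eq_abs, abs_of_pos (Real.exp_pos _),
        Real.exp_le_one_iff]
      nlinarith
    rw [div_le_one (lt_of_lt_of_le one_pos hg)]
    calc ‖Complex.I‖ * ‖((Real.exp (-a * s) : ℝ) : ℂ)‖ ≤ 1 := by
          simpa [Complex.norm_I] using he
      _ ≤ ‖(gfn a σ s y) ^ 2‖ := hg
  have h3 := norm_exp_mul_psifn σ ha hs.le hx.le y
  calc ‖(x : ℂ) * (Complex.I * ((Real.exp (-a * s) : ℝ) : ℂ) / (gfn a σ s y) ^ 2) *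
        Complex.exp ((x : ℂ) * psifn a σ s y) * ((ϱ / ς * Real.exp (-x / ς) : ℝ) : ℂ)‖
      = ‖(x : ℂ)‖ * ‖Complex.I * ((Real.exp (-a * s) : ℝ) : ℂ) / (gfn a σ s y) ^ 2‖ *
        ‖Complex.exp ((x : ℂ) * psifn a σ s y)‖ * ‖((ϱ / ς * Real.exp (-x / ς) : ℝ) : ℂ)‖ := by
        rw [norm_mul, norm_mul, norm_mul]
    _ ≤ x * 1 * 1 * |ϱ / ς * Real.exp (-x / ς)| := by
        have hxn : ‖(x : ℂ)‖ = x := by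
          rw [Complex.norm_real, Real.norm_eq_abs, abs_of_pos hx]
        have hh : ‖((ϱ / ς * Real.exp (-x / ς) : ℝ) : ℂ)‖ = |ϱ / ς * Real.exp (-x / ς)| := by
          rw [Complex.norm_real, Real.norm_eq_abs]
        rw [hxn, hh]
        gcongr <;> positivity
    _ = x * |ϱ / ς * Real.exp (-x / ς)| := by ring

lemma integrable_weight {ς : ℝ} (hς : 0 < ς) (c : ℝ) :
    MeasureTheory.IntegrableOn (fun x : ℝ => x * |c * Real.exp (-x / ς)|) (Ioi 0) := by
  have hb : (0 : ℝ) < 1 / ς := by positivity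
  have hbase := integrableOn_rpow_mul_exp_neg_mul_rpow (by norm_num : (-1 : ℝ) < 1) one_pos hb
  have h2 : MeasureTheory.IntegrableOn (fun x : ℝ => x * Real.exp (-x / ς)) (Ioi 0) := by
    apply MeasureTheory.IntegrableOn.congr_fun hbase _ measurableSet_Ioi
    intro x _
    simp only [Real.rpow_one]
    congr 1
    ring
  apply MeasureTheory.IntegrableOn.congr_fun (h2.const_mul |c|) _ measurableSet_Ioi
  intro x hx
  simp only []
  rw [abs_mul, abs_of_pos (Real.exp_pos _)]
  ring

lemma integrable_weight2 {ς : ℝ} (hς : 0 < ς) (c : ℝ) :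
    MeasureTheory.IntegrableOn (fun x : ℝ => |c * Real.exp (-x / ς)|) (Ioi 0) := by
  have hb : (0 : ℝ) < 1 / ς := by positivity
  have hbase := exp_neg_integrableOn_Ioi 0 hb
  have h2 : MeasureTheory.IntegrableOn (fun x : ℝ => Real.exp (-x / ς)) (Ioi 0) := by
    apply MeasureTheory.IntegrableOn.congr_fun hbase _ measurableSet_Ioi
    intro x _
    simp only []
    congr 1
    ring
  apply MeasureTheory.IntegrableOn.congr_fun (h2.const_mul |c|) _ measurableSet_Ioi
  intro x hx
  simp only []
  rw [abs_mul, abs_of_pos (Real.exp_pos _)]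

theorem stmt_7 (a b σ lam0 ϱ ς t : ℝ) (ha : 0 < a) (hσ : 0 < σ)
    (hϱ : 0 < ϱ) (hς : 0 < ς) (ht : 0 < t) (y : ℝ) :
    HasDerivAt (phifn a b σ lam0 ϱ ς t)
      (phifn a b σ lam0 ϱ ς t y *
        (Complex.I * (b : ℂ) * ((1 - Real.exp (-a * t) : ℝ) : ℂ) / gfn a σ t y
          + Complex.I * (lam0 : ℂ) * ((Real.exp (-a * t) : ℝ) : ℂ) / (gfn a σ t y) ^ 2
          + Complex.I * ∫ s in Set.Ioc (0 : ℝ) t, ∫ x in Set.Ioi (0 : ℝ),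
              (x : ℂ) * Complex.exp ((x : ℂ) * psifn a σ s y - ((a * s : ℝ) : ℂ))
                / (gfn a σ s y) ^ 2 * ((ϱ / ς * Real.exp (-x / ς) : ℝ) : ℂ))) y := by
  classical
  set μ : MeasureTheory.Measure (ℝ × ℝ) :=
    (MeasureTheory.volume.restrict (Ioc (0 : ℝ) t)).prod
      (MeasureTheory.volume.restrict (Ioi (0 : ℝ))) with hμ
  set F : ℝ → ℝ × ℝ → ℂ := fun y' p =>
    (Complex.exp ((p.2 : ℂ) * psifn a σ p.1 y') - 1) *
      ((ϱ / ς * Real.exp (-p.2 / ς) : ℝ) : ℂ) with hFdef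
  set F' : ℝ → ℝ × ℝ → ℂ := fun y' p =>
    (p.2 : ℂ) * (Complex.I * ((Real.exp (-a * p.1) : ℝ) : ℂ) / (gfn a σ p.1 y') ^ 2) *
      Complex.exp ((p.2 : ℂ) * psifn a σ p.1 y') *
      ((ϱ / ς * Real.exp (-p.2 / ς) : ℝ) : ℂ) with hF'def
  -- a.e. membership in the product set
  have hprodae : ∀ᵐ p ∂μ, p ∈ Ioc (0 : ℝ) t ×ˢ Ioi (0 : ℝ) := by
    rw [hμ, MeasureTheory.Measure.prod_restrict]
    exact MeasureTheory.ae_restrict_mem (measurableSet_Ioc.prod measurableSet_Ioi)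
  -- continuity / measurability
  have hFcont : ∀ y', Continuous (F y') := by
    intro y'
    apply Continuous.mul
    · apply Continuous.sub _ continuous_const
      apply Complex.continuous_exp.comp
      exact (Complex.continuous_ofReal.comp continuous_snd).mul
        ((continuous_psifn a σ y').comp continuous_fst)
    · exact Complex.continuous_ofReal.comp (by fun_prop)
  have hF'cont : ∀ y', Continuous (F' y') := by
    intro y'
    apply Continuous.mul
    apply Continuous.mul
    apply Continuous.mul
    · exact Complex.continuous_ofReal.comp continuous_snd
    · apply Continuous.div
      · fun_prop
      · exact ((continuous_gfn a σ y').comp continuous_fst).pow 2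
      · intro p
        exact pow_ne_zero 2 (gfn_ne a σ p.1 y')
    · exact Complex.continuous_exp.comp ((Complex.continuous_ofReal.comp continuous_snd).mul
        ((continuous_psifn a σ y').comp continuous_fst))
    · exact Complex.continuous_ofReal.comp (by fun_prop)
  -- integrable bound for F'
  have hboundInt : MeasureTheory.Integrable
      (fun p : ℝ × ℝ => p.2 * |ϱ / ς * Real.exp (-p.2 / ς)|) μ := by
    have h1 : MeasureTheory.Integrable (fun _ : ℝ => (1 : ℝ))
        (MeasureTheory.volume.restrict (Ioc (0 : ℝ) t)) :=
      MeasureTheory.integrableOn_const measure_Ioc_lt_top.ne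
    have h2 := integrable_weight hς (ϱ / ς)
    have := h1.mul_prod h2
    simpa using this
  -- integrability of F y' for every y'
  have hFint : ∀ y', MeasureTheory.Integrable (F y') μ := by
    intro y'
    have hbd2 : MeasureTheory.Integrable
        (fun p : ℝ × ℝ => 2 * |ϱ / ς * Real.exp (-p.2 / ς)|) μ := by
      have h1 : MeasureTheory.Integrable (fun _ : ℝ => (1 : ℝ))
          (MeasureTheory.volume.restrict (Ioc (0 : ℝ) t)) :=
        MeasureTheory.integrableOn_const measure_Ioc_lt_top.ne
      have h2 := (integrable_weight2 hς (ϱ / ς)).const_mul 2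
      have := h1.mul_prod h2
      simpa using this
    apply MeasureTheory.Integrable.mono' hbd2 (hFcont y').aestronglyMeasurable
    filter_upwards [hprodae] with p hp
    obtain ⟨hp1, hp2⟩ := hp
    have h3 := norm_exp_mul_psifn σ ha hp1.1.le hp2.out.le y'
    calc ‖F y' p‖ = ‖Complex.exp ((p.2 : ℂ) * psifn a σ p.1 y') - 1‖ *
          ‖((ϱ / ς * Real.exp (-p.2 / ς) : ℝ) : ℂ)‖ := norm_mul _ _
      _ ≤ 2 * |ϱ / ς * Real.exp (-p.2 / ς)| := by
          rw [Complex.norm_real, Real.norm_eq_abs]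
          gcongr
          calc ‖Complex.exp ((p.2 : ℂ) * psifn a σ p.1 y') - 1‖
              ≤ ‖Complex.exp ((p.2 : ℂ) * psifn a σ p.1 y')‖ + ‖(1 : ℂ)‖ := norm_sub_le _ _
            _ ≤ 1 + 1 := by rw [norm_one]; gcongr
            _ = 2 := by norm_num
  -- the dominated-derivative theorem
  have key : MeasureTheory.Integrable (F' y) μ ∧
      HasDerivAt (fun y' => ∫ p, F y' p ∂μ) (∫ p, F' y p ∂μ) y := by
    apply hasDerivAt_integral_of_dominated_loc_of_deriv_le
      (bound := fun p : ℝ × ℝ => p.2 * |ϱ / ς * Real.exp (-p.2 / ς)|) Filter.univ_mem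
    · exact Filter.Eventually.of_forall fun y' => (hFcont y').aestronglyMeasurable
    · exact hFint y
    · exact (hF'cont y).aestronglyMeasurable
    · filter_upwards [hprodae] with p hp
      intro y' _
      exact norm_Fterm'_le a σ ϱ ς ha hp.1.1 hp.2.out y'
    · exact hboundInt
    · apply MeasureTheory.ae_of_all
      intro p y' _
      exact hasDerivAt_Fterm a σ ϱ ς p.1 p.2 y'
  -- rewrite f2 via the product integral
  have hf2eq : ∀ y', f2 a σ ϱ ς t y' = Complex.exp (∫ p, F y' p ∂μ) := by
    intro y'
    unfold f2
    congr 1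
    rw [hμ]
    exact MeasureTheory.integral_integral (hFint y')
  have hphieq : phifn a b σ lam0 ϱ ς t = fun y' =>
      f1 a b σ t y' * Complex.exp ((lam0 : ℂ) * psifn a σ t y') *
        Complex.exp (∫ p, F y' p ∂μ) := by
    funext y'
    rw [phifn, hf2eq y']
  -- pointwise identity between F' and the integrand in the statement
  have hptwise : ∀ p : ℝ × ℝ, F' y p = Complex.I *
      ((p.2 : ℂ) * Complex.exp ((p.2 : ℂ) * psifn a σ p.1 y - ((a * p.1 : ℝ) : ℂ))
        / (gfn a σ p.1 y) ^ 2 * ((ϱ / ς * Real.exp (-p.2 / ς) : ℝ) : ℂ)) := by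
    intro p
    rw [hF'def]
    have hexp : Complex.exp ((p.2 : ℂ) * psifn a σ p.1 y - ((a * p.1 : ℝ) : ℂ))
        = Complex.exp ((p.2 : ℂ) * psifn a σ p.1 y) * ((Real.exp (-a * p.1) : ℝ) : ℂ) := by
      rw [Complex.exp_sub, Complex.ofReal_exp]
      rw [div_eq_mul_inv, ← Complex.exp_neg]
      congr 2
      push_cast
      ring
    rw [hexp]
    have hg2 : (gfn a σ p.1 y) ^ 2 ≠ 0 := pow_ne_zero 2 (gfn_ne a σ p.1 y)
    field_simp
  -- integral identity
  have hIntEq : (∫ p, F' y p ∂μ) = Complex.I *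
      ∫ s in Set.Ioc (0 : ℝ) t, ∫ x in Set.Ioi (0 : ℝ),
        (x : ℂ) * Complex.exp ((x : ℂ) * psifn a σ s y - ((a * s : ℝ) : ℂ))
          / (gfn a σ s y) ^ 2 * ((ϱ / ς * Real.exp (-x / ς) : ℝ) : ℂ) := by
    have hinnerInt : MeasureTheory.Integrable (fun p : ℝ × ℝ =>
        (p.2 : ℂ) * Complex.exp ((p.2 : ℂ) * psifn a σ p.1 y - ((a * p.1 : ℝ) : ℂ))
          / (gfn a σ p.1 y) ^ 2 * ((ϱ / ς * Real.exp (-p.2 / ς) : ℝ) : ℂ)) μ := by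
      have h := key.1.const_mul (-Complex.I)
      apply h.congr
      apply MeasureTheory.ae_of_all
      intro p
      show -Complex.I * F' y p = _
      rw [hptwise p, ← mul_assoc, neg_mul, Complex.I_mul_I, neg_neg, one_mul]
    have hswap : (∫ s in Set.Ioc (0 : ℝ) t, ∫ x in Set.Ioi (0 : ℝ),
        (x : ℂ) * Complex.exp ((x : ℂ) * psifn a σ s y - ((a * s : ℝ) : ℂ))
          / (gfn a σ s y) ^ 2 * ((ϱ / ς * Real.exp (-x / ς) : ℝ) : ℂ))
        = ∫ p, (p.2 : ℂ) * Complex.exp ((p.2 : ℂ) * psifn a σ p.1 y - ((a * p.1 : ℝ) : ℂ))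
          / (gfn a σ p.1 y) ^ 2 * ((ϱ / ς * Real.exp (-p.2 / ς) : ℝ) : ℂ) ∂μ := by
      rw [hμ]
      exact MeasureTheory.integral_integral hinnerInt
    rw [hswap, ← MeasureTheory.integral_const_mul]
    apply MeasureTheory.integral_congr_ae
    apply MeasureTheory.ae_of_all
    intro p
    exact hptwise p
  -- the three factors
  have hA := hasDerivAt_f1 a b σ t ha hσ y
  have hB : HasDerivAt (fun y' : ℝ => Complex.exp ((lam0 : ℂ) * psifn a σ t y'))
      (Complex.exp ((lam0 : ℂ) * psifn a σ t y) *
        (Complex.I * (lam0 : ℂ) * ((Real.exp (-a * t) : ℝ) : ℂ) / (gfn a σ t y) ^ 2)) y := by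
    have h := ((hasDerivAt_psifn a σ t y).const_mul (lam0 : ℂ)).cexp
    convert h using 1
    ring
  have hC : HasDerivAt (fun y' => Complex.exp (∫ p, F y' p ∂μ))
      (Complex.exp (∫ p, F y p ∂μ) * (∫ p, F' y p ∂μ)) y := key.2.cexp
  have hABC := (hA.mul hB).mul hC
  rw [hphieq]
  refine hABC.congr_deriv ?_
  simp only [Pi.mul_apply]
  rw [← hIntEq]
  ring
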